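/- arXiv:2109.01553 — 8 statements merged into one kernel-verified Lean document; each statement's English description precedes it below -/
import Mathlib

section
/- Consider the perturbed LTI discrete-time system ξ(k+1) = 𝒜ξ(k) + Σ_{i=1}^{N} ℬ_i w_i(k) with state ξ(k) ∈ ℝ^{n}, perturbations w_i(k) ∈ ℝ^{p_i} satisfying w_i(k)ᵀ W_i w_i(k) ≤ 1 for positive definite matrices W_i, and real matrices 𝒜 ∈ ℝ^{n×n}, ℬ_i ∈ ℝ^{n×p_i}. Let a ∈ (0,1). Suppose there exist constants a_1,…,a_N ∈ (0,1) with a_1+…+a_N ≥ a and a positive definite matrix P ∈ ℝ^{n×n} such that the block matrix [[aP, 𝒜ᵀP, 0], [P𝒜, P, Pℬ], [0, ℬᵀP, W_a]] is positive semidefinite, where ℬ = [ℬ_1 … ℬ_N] and W_a = diag((1−a_1)W_1, …, (1−a_N)W_N). Then for every k ≥ 1 and every trajectory of the system starting from ξ(1) with admissible perturbations, ξ(k)ᵀ P ξ(k) ≤ α_k, where α_k := a^{k−1} ξ(1)ᵀ P ξ(1) + (N−a)(1−a^{k−1})/(1−a). -/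
open Matrix

lemma trans_dot {n m : Type*} [Fintype n] [Fintype m]
    (M : Matrix m n ℝ) (x : n → ℝ) (t : m → ℝ) :
    x ⬝ᵥ (Mᵀ *ᵥ t) = (M *ᵥ x) ⬝ᵥ t := by
  rw [dotProduct_mulVec, vecMul_transpose, dotProduct_comm, dotProduct_mulVec]

lemma key_step {n : ℕ} {m : Type*} [Fintype m]
    (𝒜 : Matrix (Fin n) (Fin n) ℝ) (B : Matrix (Fin n) m ℝ)
    (Wa : Matrix m m ℝ) (a : ℝ) (P : Matrix (Fin n) (Fin n) ℝ)
    (hLMI : (Matrix.fromBlocks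
        (Matrix.fromBlocks (a • P) (𝒜ᵀ * P) (P * 𝒜) P)
        (Matrix.fromRows (0 : Matrix (Fin n) m ℝ) (P * B))
        (Matrix.fromCols (0 : Matrix m (Fin n) ℝ) (Bᵀ * P))
        Wa).PosSemidef)
    (x : Fin n → ℝ) (u : m → ℝ) :
    (𝒜 *ᵥ x + B *ᵥ u) ⬝ᵥ (P *ᵥ (𝒜 *ᵥ x + B *ᵥ u)) ≤
      a * (x ⬝ᵥ (P *ᵥ x)) + u ⬝ᵥ (Wa *ᵥ u) := by
  set η := 𝒜 *ᵥ x + B *ᵥ u with hη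
  have h := hLMI.dotProduct_mulVec_nonneg (Sum.elim (Sum.elim x (-η)) u)
  simp only [star_trivial, fromBlocks_mulVec, Sum.elim_comp_inl, Sum.elim_comp_inr,
    fromRows_mulVec, fromCols_mulVec_sumElim, sumElim_dotProduct_sumElim,
    dotProduct_add, add_dotProduct, smul_mulVec, dotProduct_smul, smul_eq_mul,
    zero_mulVec, mulVec_zero, dotProduct_zero, add_zero, zero_add, ← mulVec_mulVec,
    mulVec_neg, dotProduct_neg, neg_dotProduct, neg_neg, trans_dot] at h
  have e1 : (𝒜 *ᵥ x) ⬝ᵥ (P *ᵥ η) + (B *ᵥ u) ⬝ᵥ (P *ᵥ η) = η ⬝ᵥ (P *ᵥ η) := by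
    rw [← add_dotProduct, ← hη]
  have e2 : η ⬝ᵥ (P *ᵥ (𝒜 *ᵥ x)) + η ⬝ᵥ (P *ᵥ (B *ᵥ u)) = η ⬝ᵥ (P *ᵥ η) := by
    rw [← dotProduct_add, ← mulVec_add, ← hη]
  linarith

lemma bd_quadform {N : ℕ} {p : Fin N → ℕ} (d : ∀ i, Matrix (Fin (p i)) (Fin (p i)) ℝ)
    (u : ((i : Fin N) × Fin (p i)) → ℝ) :
    u ⬝ᵥ (Matrix.blockDiagonal' d *ᵥ u) =
      ∑ i, (fun j => u ⟨i, j⟩) ⬝ᵥ (d i *ᵥ fun j => u ⟨i, j⟩) := by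
  simp only [dotProduct, ← Finset.univ_sigma_univ, Finset.sum_sigma]
  refine Finset.sum_congr rfl fun i _ => Finset.sum_congr rfl fun j _ => ?_
  congr 1
  simp only [mulVec, dotProduct, ← Finset.univ_sigma_univ, Finset.sum_sigma,
    blockDiagonal'_apply]
  rw [Finset.sum_eq_single i]
  · simp
  · intro b _ hb; simp [hb.symm]
  · simp

lemma bmat_mulVec {n N : ℕ} {p : Fin N → ℕ} (ℬ : ∀ i, Matrix (Fin n) (Fin (p i)) ℝ)
    (u : ((i : Fin N) × Fin (p i)) → ℝ) :
    (Matrix.of (fun r (j : (i : Fin N) × Fin (p i)) => ℬ j.1 r j.2)) *ᵥ u =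
      ∑ i, ℬ i *ᵥ fun j => u ⟨i, j⟩ := by
  ext r
  simp only [mulVec, dotProduct, ← Finset.univ_sigma_univ, Finset.sum_sigma,
    Finset.sum_apply, of_apply]

/-- Outer ellipsoidal approximation of the reachable set of a perturbed
LTI discrete-time system `ξ(k+1) = 𝒜 ξ(k) + ∑ᵢ ℬᵢ wᵢ(k)` with `wᵢᵀ Wᵢ wᵢ ≤ 1`:
if the LMI holds, then every trajectory satisfies `ξ(k)ᵀ P ξ(k) ≤ α_k` for all `k ≥ 1`. -/
theorem stmt0 {n N : ℕ} {p : Fin N → ℕ}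
    (𝒜 : Matrix (Fin n) (Fin n) ℝ)
    (ℬ : ∀ i, Matrix (Fin n) (Fin (p i)) ℝ)
    (W : ∀ i, Matrix (Fin (p i)) (Fin (p i)) ℝ)
    (hW : ∀ i, (W i).PosDef)
    (a : ℝ) (ha : a ∈ Set.Ioo (0 : ℝ) 1)
    (as : Fin N → ℝ) (has : ∀ i, as i ∈ Set.Ioo (0 : ℝ) 1)
    (hsum : a ≤ ∑ i, as i)
    (P : Matrix (Fin n) (Fin n) ℝ) (hP : P.PosDef)
    -- the combined matrix ℬ = [ℬ₁ … ℬ_N] and W_a = diag((1-a₁)W₁, …, (1-a_N)W_N)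
    (hLMI : (Matrix.fromBlocks
        (Matrix.fromBlocks (a • P) (𝒜ᵀ * P) (P * 𝒜) P)
        (Matrix.fromRows (0 : Matrix (Fin n) ((i : Fin N) × Fin (p i)) ℝ)
          (P * Matrix.of (fun r (j : (i : Fin N) × Fin (p i)) => ℬ j.1 r j.2)))
        (Matrix.fromCols (0 : Matrix ((i : Fin N) × Fin (p i)) (Fin n) ℝ)
          ((Matrix.of (fun r (j : (i : Fin N) × Fin (p i)) => ℬ j.1 r j.2))ᵀ * P))
        (Matrix.blockDiagonal' (fun i => (1 - as i) • W i))).PosSemidef)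
    -- a trajectory with admissible perturbations
    (ξ : ℕ → Fin n → ℝ) (w : ℕ → ∀ i, Fin (p i) → ℝ)
    (hdyn : ∀ k ≥ 1, ξ (k + 1) = 𝒜 *ᵥ ξ k + ∑ i, ℬ i *ᵥ w k i)
    (hw : ∀ k, ∀ i, w k i ⬝ᵥ (W i *ᵥ w k i) ≤ 1) :
    ∀ k ≥ 1, ξ k ⬝ᵥ (P *ᵥ ξ k) ≤
      a ^ (k - 1) * (ξ 1 ⬝ᵥ (P *ᵥ ξ 1)) + ((N : ℝ) - a) * (1 - a ^ (k - 1)) / (1 - a) := by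
  obtain ⟨ha0, ha1⟩ := ha
  -- the one-step inequality
  have step : ∀ k ≥ 1, ξ (k + 1) ⬝ᵥ (P *ᵥ ξ (k + 1)) ≤
      a * (ξ k ⬝ᵥ (P *ᵥ ξ k)) + ((N : ℝ) - a) := by
    intro k hk
    set u : ((i : Fin N) × Fin (p i)) → ℝ := fun j => w k j.1 j.2 with hu
    have hB : (Matrix.of (fun r (j : (i : Fin N) × Fin (p i)) => ℬ j.1 r j.2)) *ᵥ u =
        ∑ i, ℬ i *ᵥ w k i := bmat_mulVec ℬ u
    have hk1 : ξ (k + 1) = 𝒜 *ᵥ ξ k +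
        (Matrix.of (fun r (j : (i : Fin N) × Fin (p i)) => ℬ j.1 r j.2)) *ᵥ u := by
      rw [hB]; exact hdyn k hk
    have h1 := key_step 𝒜 (Matrix.of (fun r (j : (i : Fin N) × Fin (p i)) => ℬ j.1 r j.2))
      (Matrix.blockDiagonal' (fun i => (1 - as i) • W i)) a P hLMI (ξ k) u
    rw [← hk1] at h1
    have h2 : u ⬝ᵥ (Matrix.blockDiagonal' (fun i => (1 - as i) • W i) *ᵥ u) ≤ (N : ℝ) - a := by
      rw [bd_quadform]
      have hbi : ∀ i : Fin N, (fun j => u ⟨i, j⟩) ⬝ᵥ (((1 - as i) • W i) *ᵥ fun j => u ⟨i, j⟩)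
          ≤ 1 - as i := by
        intro i
        have : (fun j => u ⟨i, j⟩) = w k i := rfl
        rw [this, smul_mulVec, dotProduct_smul, smul_eq_mul]
        have h1i : 0 < 1 - as i := by linarith [(has i).2]
        nlinarith [hw k i]
      calc ∑ i, (fun j => u ⟨i, j⟩) ⬝ᵥ (((1 - as i) • W i) *ᵥ fun j => u ⟨i, j⟩)
          ≤ ∑ i, (1 - as i) := Finset.sum_le_sum fun i _ => hbi i
        _ = (N : ℝ) - ∑ i, as i := by
            rw [Finset.sum_sub_distrib]; simp
        _ ≤ (N : ℝ) - a := by linarith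
    linarith
  -- induction
  intro k hk
  induction k, hk using Nat.le_induction with
  | base => simp
  | succ k hk ih =>
    have hstep := step k hk
    have hmono : a * (ξ k ⬝ᵥ (P *ᵥ ξ k)) ≤
        a * (a ^ (k - 1) * (ξ 1 ⬝ᵥ (P *ᵥ ξ 1)) + ((N : ℝ) - a) * (1 - a ^ (k - 1)) / (1 - a)) :=
      mul_le_mul_of_nonneg_left ih (le_of_lt ha0)
    have hpow : a ^ (k + 1 - 1) = a * a ^ (k - 1) := by
      rw [show k + 1 - 1 = (k - 1) + 1 from by omega, pow_succ]; ring
    have halg : a * (a ^ (k - 1) * (ξ 1 ⬝ᵥ (P *ᵥ ξ 1)) +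
        ((N : ℝ) - a) * (1 - a ^ (k - 1)) / (1 - a)) + ((N : ℝ) - a) =
        a ^ (k + 1 - 1) * (ξ 1 ⬝ᵥ (P *ᵥ ξ 1)) +
        ((N : ℝ) - a) * (1 - a ^ (k + 1 - 1)) / (1 - a) := by
      rw [hpow]
      have h1a : (1 : ℝ) - a ≠ 0 := by linarith
      field_simp
      ring
    linarith
end

section
/- Let 𝒜 ∈ ℝ^{n×n}, ℬ_i ∈ ℝ^{n×p_i} for i = 1,…,N, let W_i ∈ ℝ^{p_i×p_i} be positive definite, let a, a_1, …, a_N ∈ (0,1), and let P ∈ ℝ^{n×n} be positive definite. Suppose the block matrix [[aP, 𝒜ᵀP, 0], [P𝒜, P, Pℬ], [0, ℬᵀP, W_a]] is positive semidefinite, where ℬ = [ℬ_1 … ℬ_N] and W_a = diag((1−a_1)W_1, …, (1−a_N)W_N). Then for every ξ ∈ ℝ^{n} and every w_1,…,w_N with w_iᵀ W_i w_i ≤ 1, the successor state ξ⁺ := 𝒜ξ + Σ_{i=1}^{N} ℬ_i w_i satisfies ξ⁺ᵀ P ξ⁺ ≤ a ξᵀPξ + Σ_{i=1}^{N} (1−a_i)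 w_iᵀW_iw_i ≤ a ξᵀPξ + (N − Σ_{i=1}^{N} a_i). -/
open Matrix

private lemma bd_mulVec {N : ℕ} {p : Fin N → ℕ} (M : ∀ i, Matrix (Fin (p i)) (Fin (p i)) ℝ)
    (w : ∀ i, Fin (p i) → ℝ) :
    blockDiagonal' M *ᵥ (fun j => w j.1 j.2) = fun j => (M j.1 *ᵥ w j.1) j.2 := by
  funext ⟨i, x⟩
  simp only [mulVec, dotProduct, blockDiagonal'_apply]
  rw [← Finset.univ_sigma_univ, Finset.sum_sigma]
  rw [Finset.sum_eq_single i]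
  · simp
  · intro j _ hj; simp [Ne.symm hj]
  · simp

private lemma B_mulVec {n N : ℕ} {p : Fin N → ℕ} (ℬ : ∀ i, Matrix (Fin n) (Fin (p i)) ℝ)
    (w : ∀ i, Fin (p i) → ℝ) :
    (Matrix.of (fun r (j : (i : Fin N) × Fin (p i)) => ℬ j.1 r j.2)) *ᵥ (fun j => w j.1 j.2)
      = ∑ i, ℬ i *ᵥ w i := by
  funext r
  simp only [mulVec, dotProduct, Finset.sum_apply, of_apply]
  rw [← Finset.univ_sigma_univ, Finset.sum_sigma]

/-- One-step quadratic decrease property: if the LMI holds, then the successor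
state `ξ⁺ = 𝒜 ξ + ∑ᵢ ℬᵢ wᵢ` satisfies
`ξ⁺ᵀ P ξ⁺ ≤ a ξᵀPξ + ∑ᵢ (1-aᵢ) wᵢᵀWᵢwᵢ ≤ a ξᵀPξ + (N - ∑ᵢ aᵢ)`. -/
theorem stmt1 {n N : ℕ} {p : Fin N → ℕ}
    (𝒜 : Matrix (Fin n) (Fin n) ℝ)
    (ℬ : ∀ i, Matrix (Fin n) (Fin (p i)) ℝ)
    (W : ∀ i, Matrix (Fin (p i)) (Fin (p i)) ℝ)
    (hW : ∀ i, (W i).PosDef)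
    (a : ℝ) (ha : a ∈ Set.Ioo (0 : ℝ) 1)
    (as : Fin N → ℝ) (has : ∀ i, as i ∈ Set.Ioo (0 : ℝ) 1)
    (P : Matrix (Fin n) (Fin n) ℝ) (hP : P.PosDef)
    (hLMI : (Matrix.fromBlocks
        (Matrix.fromBlocks (a • P) (𝒜ᵀ * P) (P * 𝒜) P)
        (Matrix.fromRows (0 : Matrix (Fin n) ((i : Fin N) × Fin (p i)) ℝ)
          (P * Matrix.of (fun r (j : (i : Fin N) × Fin (p i)) => ℬ j.1 r j.2)))
        (Matrix.fromCols (0 : Matrix ((i : Fin N) × Fin (p i)) (Fin n) ℝ)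
          ((Matrix.of (fun r (j : (i : Fin N) × Fin (p i)) => ℬ j.1 r j.2))ᵀ * P))
        (Matrix.blockDiagonal' (fun i => (1 - as i) • W i))).PosSemidef)
    (ξ : Fin n → ℝ) (w : ∀ i, Fin (p i) → ℝ)
    (hw : ∀ i, w i ⬝ᵥ (W i *ᵥ w i) ≤ 1) :
    ((𝒜 *ᵥ ξ + ∑ i, ℬ i *ᵥ w i) ⬝ᵥ (P *ᵥ (𝒜 *ᵥ ξ + ∑ i, ℬ i *ᵥ w i)) ≤
        a * (ξ ⬝ᵥ (P *ᵥ ξ)) + ∑ i, (1 - as i) * (w i ⬝ᵥ (W i *ᵥ w i))) ∧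
    (a * (ξ ⬝ᵥ (P *ᵥ ξ)) + ∑ i, (1 - as i) * (w i ⬝ᵥ (W i *ᵥ w i)) ≤
        a * (ξ ⬝ᵥ (P *ᵥ ξ)) + ((N : ℝ) - ∑ i, as i)) := by
  set B : Matrix (Fin n) ((i : Fin N) × Fin (p i)) ℝ :=
    Matrix.of (fun r (j : (i : Fin N) × Fin (p i)) => ℬ j.1 r j.2) with hBdef
  set w' : ((i : Fin N) × Fin (p i)) → ℝ := fun j => w j.1 j.2 with hw'def
  set ξp : Fin n → ℝ := 𝒜 *ᵥ ξ + ∑ i, ℬ i *ᵥ w i with hξp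
  have hBw : B *ᵥ w' = ∑ i, ℬ i *ᵥ w i := B_mulVec ℬ w
  have hPt : Pᵀ = P := hP.isHermitian
  -- symmetry of the bilinear form
  have hsym : ∀ u v : Fin n → ℝ, u ⬝ᵥ (P *ᵥ v) = v ⬝ᵥ (P *ᵥ u) := by
    intro u v
    rw [Matrix.dotProduct_mulVec]
    conv_lhs => rw [← hPt]
    rw [Matrix.vecMul_transpose, dotProduct_comm]
  -- the block-diagonal quadratic form
  have hWa : w' ⬝ᵥ (blockDiagonal' (fun i => (1 - as i) • W i) *ᵥ w')
      = ∑ i, (1 - as i) * (w i ⬝ᵥ (W i *ᵥ w i)) := by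
    rw [bd_mulVec]
    rw [hw'def]
    show (∑ j : (i : Fin N) × Fin (p i), w j.1 j.2 * _) = _
    rw [← Finset.univ_sigma_univ, Finset.sum_sigma]
    refine Finset.sum_congr rfl fun i _ => ?_
    simp [Matrix.smul_mulVec, dotProduct, Finset.mul_sum, mul_assoc, mul_left_comm]
  -- evaluate the PSD quadratic form on the test vector
  have key := hLMI.dotProduct_mulVec_nonneg (Sum.elim (Sum.elim ξ (-ξp)) w')
  rw [show (star (Sum.elim (Sum.elim ξ (-ξp)) w') : _ → ℝ)
      = Sum.elim (Sum.elim ξ (-ξp)) w' from rfl] at key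
  simp only [Matrix.fromBlocks_mulVec, Sum.elim_comp_inl, Sum.elim_comp_inr,
    Matrix.fromRows_mulVec, Matrix.fromCols_mulVec_sumElim] at key
  simp only [sumElim_dotProduct_sumElim, Matrix.zero_mulVec, zero_add,
    Matrix.add_mulVec, dotProduct_add, Matrix.smul_mulVec,
    dotProduct_smul, smul_eq_mul, Pi.add_apply, Matrix.mulVec_neg,
    dotProduct_neg, neg_dotProduct, add_zero,
    ← Matrix.mulVec_mulVec] at key
  rw [hWa, hBw] at key
  -- rewrite cross terms
  have h1 : ξ ⬝ᵥ (𝒜ᵀ *ᵥ (P *ᵥ ξp)) = (𝒜 *ᵥ ξ) ⬝ᵥ (P *ᵥ ξp) := by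
    rw [Matrix.dotProduct_mulVec, Matrix.vecMul_transpose]
  have h2 : w' ⬝ᵥ (Bᵀ *ᵥ (P *ᵥ ξp)) = (∑ i, ℬ i *ᵥ w i) ⬝ᵥ (P *ᵥ ξp) := by
    rw [Matrix.dotProduct_mulVec, Matrix.vecMul_transpose, hBw]
  have h3 : ξp ⬝ᵥ (P *ᵥ (𝒜 *ᵥ ξ)) = (𝒜 *ᵥ ξ) ⬝ᵥ (P *ᵥ ξp) := hsym _ _
  have h4 : ξp ⬝ᵥ (P *ᵥ (∑ i, ℬ i *ᵥ w i)) = (∑ i, ℬ i *ᵥ w i) ⬝ᵥ (P *ᵥ ξp) := hsym _ _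
  rw [h1, h2, h3, h4] at key
  have hsplit : ξp ⬝ᵥ (P *ᵥ ξp) = (𝒜 *ᵥ ξ) ⬝ᵥ (P *ᵥ ξp) + (∑ i, ℬ i *ᵥ w i) ⬝ᵥ (P *ᵥ ξp) := by
    rw [hξp, add_dotProduct]
  constructor
  · -- first inequality from `key`
    simp only [dotProduct_zero, neg_neg] at key
    linarith [key, hsplit]
  · have hbound : ∀ i ∈ Finset.univ, (1 - as i) * (w i ⬝ᵥ (W i *ᵥ w i)) ≤ (1 - as i) := by
      intro i _
      have h1 : (0:ℝ) ≤ 1 - as i := by have := (has i).2; linarith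
      nlinarith [hw i]
    have hs := Finset.sum_le_sum hbound
    simp only [Finset.sum_sub_distrib, Finset.sum_const, Finset.card_univ,
      Fintype.card_fin, nsmul_eq_mul, mul_one] at hs
    linarith [hs]
end

section
/- Consider the discrete-time estimation error dynamics e(k+1) = (I − L C) A e(k) − B w₁(k) − L w₂(k+1), where A ∈ ℝ^{n×n}, B ∈ ℝ^{n×p}, C ∈ ℝ^{m×n}, L ∈ ℝ^{n×m}, and w₁(k) ∈ ℝ^{p}, w₂(k) ∈ ℝ^{m} are bounded disturbance sequences. Let α ∈ (0,1), and suppose there exist constants μ₁, μ₂ > 0 and matrices P ∈ ℝ^{n×n} positive definite and Y ∈ ℝ^{n×m} such that: (i) the block matrix with rows [−P, *, *, *], [Aᵀ(P − CᵀYᵀ), (α−1)P, *, *], [BᵀP, 0, −αμ₁I, *], [Yᵀ, 0, 0, −αμ₁I] (filled symmetrically) is negative semidefinite, and (ii) [[P, I],[I, μ₂I]] is positive semidefinite. Then with L = P^{−1}Y, the estimation error satisfies, for all k ≥ 0, |e(k)| ≤ √(μ₂ λ_max(P)) · (√(1−α))^{k} · |e(0)| + √(μ₁μ₂) · (‖w₁‖_∞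 + ‖w₂‖_∞), where λ_max(P) is the largest eigenvalue of P, |·| is the Euclidean norm, and ‖w‖_∞ := sup_{k≥0} |w(k)|. -/
open Matrix

private theorem dot_trans' {k l : ℕ} (M : Matrix (Fin k) (Fin l) ℝ) (u : Fin k → ℝ)
    (w : Fin l → ℝ) : u ⬝ᵥ M *ᵥ w = w ⬝ᵥ Mᵀ *ᵥ u := by
  rw [dotProduct_mulVec, dotProduct_comm, mulVec_transpose]

private theorem dot_self_nonneg' {k : ℕ} (v : Fin k → ℝ) : 0 ≤ v ⬝ᵥ v :=
  Finset.sum_nonneg fun i _ => mul_self_nonneg _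

private theorem sqrt_add_le' {x y : ℝ} (hx : 0 ≤ x) (hy : 0 ≤ y) :
    Real.sqrt (x + y) ≤ Real.sqrt x + Real.sqrt y := by
  rw [show Real.sqrt x + Real.sqrt y = Real.sqrt ((Real.sqrt x + Real.sqrt y)^2) from
    (Real.sqrt_sq (by positivity)).symm]
  apply Real.sqrt_le_sqrt
  nlinarith [Real.sq_sqrt hx, Real.sq_sqrt hy, Real.sqrt_nonneg x, Real.sqrt_nonneg y]

private theorem sqrt_pow' {x : ℝ} (hx : 0 ≤ x) (k : ℕ) :
    Real.sqrt (x ^ k) = Real.sqrt x ^ k := by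
  induction k with
  | zero => simp
  | succ k ih => rw [pow_succ, pow_succ, Real.sqrt_mul (pow_nonneg hx k), ih]

private theorem lmi2_bound' {n : ℕ} (μ₂ : ℝ) (hμ₂ : 0 < μ₂) (P : Matrix (Fin n) (Fin n) ℝ)
    (h : (Matrix.fromBlocks P (1 : Matrix (Fin n) (Fin n) ℝ)
        (1 : Matrix (Fin n) (Fin n) ℝ) (μ₂ • (1 : Matrix (Fin n) (Fin n) ℝ))).PosSemidef)
    (x : Fin n → ℝ) : x ⬝ᵥ x ≤ μ₂ * (x ⬝ᵥ (P *ᵥ x)) := by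
  have h2 := h.dotProduct_mulVec_nonneg (Sum.elim x (-(μ₂⁻¹ • x)))
  have hs : star (Sum.elim x (-(μ₂⁻¹ • x))) = Sum.elim x (-(μ₂⁻¹ • x)) := by
    ext i; simp [Pi.star_apply]
  rw [hs] at h2
  simp [fromBlocks_mulVec, dotProduct_block, mulVec_smul, dotProduct_smul, smul_dotProduct,
    dotProduct_neg, neg_dotProduct, one_mulVec, mulVec_neg, smul_smul,
    smul_mulVec] at h2
  rw [inv_mul_cancel₀ hμ₂.ne', one_mul] at h2
  have h6 : μ₂⁻¹ * (x ⬝ᵥ x) ≤ x ⬝ᵥ P *ᵥ x := by linarith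
  calc x ⬝ᵥ x = μ₂ * (μ₂⁻¹ * (x ⬝ᵥ x)) := by field_simp
    _ ≤ μ₂ * (x ⬝ᵥ (P *ᵥ x)) := mul_le_mul_of_nonneg_left h6 hμ₂.le

private theorem rayleigh' {n : ℕ} (P : Matrix (Fin n) (Fin n) ℝ) (hP : P.IsHermitian)
    (x : Fin n → ℝ) : x ⬝ᵥ (P *ᵥ x) ≤ (⨆ i, hP.eigenvalues i) * (x ⬝ᵥ x) := by
  rcases Nat.eq_zero_or_pos n with hn | hn
  · subst hn
    simp [dotProduct, iSup_of_empty', Real.sSup_empty]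
  · have hne : Nonempty (Fin n) := ⟨⟨0, hn⟩⟩
    set U : Matrix (Fin n) (Fin n) ℝ := (hP.eigenvectorUnitary : Matrix (Fin n) (Fin n) ℝ) with hU
    have hstar : star U = Uᵀ := by
      rw [Matrix.star_eq_conjTranspose, conjTranspose_eq_transpose_of_trivial]
    set y : Fin n → ℝ := Uᵀ *ᵥ x with hy
    have hUU : U * Uᵀ = 1 := by
      have := (Matrix.mem_unitaryGroup_iff).mp hP.eigenvectorUnitary.2
      rwa [← hU, hstar] at this
    have hyy : y ⬝ᵥ y = x ⬝ᵥ x := by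
      rw [hy, mulVec_transpose, ← dotProduct_mulVec, ← mulVec_transpose, mulVec_mulVec,
        hUU, one_mulVec]
    have hxy : x ⬝ᵥ (P *ᵥ x) = ∑ i, hP.eigenvalues i * (y i)^2 := by
      conv_lhs => rw [hP.spectral_theorem, Unitary.conjStarAlgAut_apply]
      rw [← hU]
      rw [hstar, ← mulVec_mulVec, ← mulVec_mulVec, dotProduct_mulVec, ← mulVec_transpose,
        ← hy]
      have hdiag : diagonal (RCLike.ofReal ∘ hP.eigenvalues) = diagonal hP.eigenvalues := by
        simp [Function.comp]
      rw [hdiag]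
      simp only [dotProduct, mulVec_diagonal, sq]
      exact Finset.sum_congr rfl fun i _ => by ring
    rw [hxy, ← hyy]
    have hle : ∀ i, hP.eigenvalues i ≤ ⨆ j, hP.eigenvalues j := fun i =>
      le_ciSup (Set.Finite.bddAbove (Set.finite_range _)) i
    calc ∑ i, hP.eigenvalues i * (y i)^2 ≤ ∑ i, (⨆ j, hP.eigenvalues j) * (y i)^2 := by
          apply Finset.sum_le_sum
          intro i _
          exact mul_le_mul_of_nonneg_right (hle i) (sq_nonneg _)
      _ = (⨆ j, hP.eigenvalues j) * (y ⬝ᵥ y) := by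
          rw [← Finset.mul_sum]; congr 1; simp [dotProduct, sq]

private theorem lmi1_bound' {n p m : ℕ}
    (A : Matrix (Fin n) (Fin n) ℝ) (B : Matrix (Fin n) (Fin p) ℝ)
    (C : Matrix (Fin m) (Fin n) ℝ) (α μ₁ : ℝ)
    (P : Matrix (Fin n) (Fin n) ℝ) (hP : P.PosDef) (Y : Matrix (Fin n) (Fin m) ℝ)
    (hLMI1 : (-(Matrix.fromBlocks
        (Matrix.fromBlocks (-P) ((Aᵀ * (P - Cᵀ * Yᵀ))ᵀ) (Aᵀ * (P - Cᵀ * Yᵀ)) ((α - 1) • P))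
        (Matrix.fromBlocks (Bᵀ * P) 0 Yᵀ 0)ᵀ
        (Matrix.fromBlocks (Bᵀ * P) 0 Yᵀ 0)
        (Matrix.fromBlocks (-(α * μ₁) • (1 : Matrix (Fin p) (Fin p) ℝ)) 0 0
          (-(α * μ₁) • (1 : Matrix (Fin m) (Fin m) ℝ))))).PosSemidef)
    (x : Fin n → ℝ) (a : Fin p → ℝ) (b : Fin m → ℝ) :
    (((1 - (P⁻¹ * Y) * C) * A) *ᵥ x + B *ᵥ a + (P⁻¹ * Y) *ᵥ b) ⬝ᵥ
      (P *ᵥ (((1 - (P⁻¹ * Y) * C) * A) *ᵥ x + B *ᵥ a + (P⁻¹ * Y) *ᵥ b)) ≤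
    (1 - α) * (x ⬝ᵥ (P *ᵥ x)) + α * μ₁ * (a ⬝ᵥ a) + α * μ₁ * (b ⬝ᵥ b) := by
  set L : Matrix (Fin n) (Fin m) ℝ := P⁻¹ * Y with hLdef
  set v : Fin n → ℝ := ((1 - L * C) * A) *ᵥ x + B *ᵥ a + L *ᵥ b with hv
  have hPsymm : Pᵀ = P := by
    have := hP.1
    rwa [← conjTranspose_eq_transpose_of_trivial]
  have hPL : P * L = Y := by
    rw [hLdef, ← Matrix.mul_assoc, Matrix.mul_nonsing_inv _ (isUnit_iff_ne_zero.2 hP.det_pos.ne'),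
      Matrix.one_mul]
  have hF : P * ((1 - L * C) * A) = (P - Cᵀ * Yᵀ)ᵀ * A := by
    rw [transpose_sub, transpose_mul, transpose_transpose, transpose_transpose, hPsymm,
      ← Matrix.mul_assoc, Matrix.mul_sub, Matrix.mul_one, ← Matrix.mul_assoc, hPL]
  have h2 := hLMI1.dotProduct_mulVec_nonneg (Sum.elim (Sum.elim v x) (Sum.elim a b))
  have hs : star (Sum.elim (Sum.elim v x) (Sum.elim a b)) =
      Sum.elim (Sum.elim v x) (Sum.elim a b) := by ext i; simp [Pi.star_apply]
  rw [hs] at h2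
  simp only [neg_mulVec, fromBlocks_transpose, fromBlocks_mulVec, dotProduct_block,
    Sum.elim_comp_inl, Sum.elim_comp_inr, dotProduct_neg, Pi.add_apply, mulVec_add,
    dotProduct_add, transpose_mul, transpose_transpose, transpose_zero, dotProduct_zero,
    zero_mulVec, add_zero, zero_add, smul_mulVec, dotProduct_smul,
    neg_smul, smul_dotProduct, one_mulVec, neg_neg, smul_eq_mul] at h2
  have E2 : x ⬝ᵥ (Aᵀ * (P - Cᵀ * Yᵀ)) *ᵥ v = v ⬝ᵥ ((P - Cᵀ * Yᵀ)ᵀ * A) *ᵥ x := by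
    rw [dot_trans', transpose_mul, transpose_transpose]
  have E3 : a ⬝ᵥ (Bᵀ * P) *ᵥ v = v ⬝ᵥ (Pᵀ * B) *ᵥ a := by
    rw [dot_trans', transpose_mul, transpose_transpose]
  have E4 : b ⬝ᵥ Yᵀ *ᵥ v = v ⬝ᵥ Y *ᵥ b := by
    rw [dot_trans', transpose_transpose]
  have hPv : P *ᵥ v = ((P - Cᵀ * Yᵀ)ᵀ * A) *ᵥ x + (Pᵀ * B) *ᵥ a + Y *ᵥ b := by
    rw [hv, mulVec_add, mulVec_add, mulVec_mulVec, mulVec_mulVec, hF, hPsymm, ← hPL,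
      mulVec_mulVec]
  have E0 : v ⬝ᵥ P *ᵥ v =
      v ⬝ᵥ ((P - Cᵀ * Yᵀ)ᵀ * A) *ᵥ x + v ⬝ᵥ (Pᵀ * B) *ᵥ a + v ⬝ᵥ Y *ᵥ b := by
    rw [hPv, dotProduct_add, dotProduct_add]
  linarith [h2, E0, E2, E3, E4]

/-- ISS estimate for the observer error dynamics
`e(k+1) = (I - LC)A e(k) - B w₁(k) - L w₂(k+1)` with `L = P⁻¹Y`: if the two LMIs hold
(the first expressed as negative semidefiniteness, i.e. `(-(·)).PosSemidef`), then
`|e(k)| ≤ √(μ₂ λ_max(P)) (√(1-α))^k |e(0)| + √(μ₁μ₂)(‖w₁‖_∞ + ‖w₂‖_∞)`.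
Euclidean norms are written as `√(v ⬝ᵥ v)` and `‖w‖_∞ = ⨆ k, √(w k ⬝ᵥ w k)`. -/
theorem stmt4 {n p m : ℕ}
    (A : Matrix (Fin n) (Fin n) ℝ) (B : Matrix (Fin n) (Fin p) ℝ)
    (C : Matrix (Fin m) (Fin n) ℝ)
    (α μ₁ μ₂ : ℝ) (hα : α ∈ Set.Ioo (0 : ℝ) 1) (hμ₁ : 0 < μ₁) (hμ₂ : 0 < μ₂)
    (P : Matrix (Fin n) (Fin n) ℝ) (hP : P.PosDef) (Y : Matrix (Fin n) (Fin m) ℝ)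
    -- LMI (i): the symmetric 4×4 block matrix is negative semidefinite
    (hLMI1 : (-(Matrix.fromBlocks
        (Matrix.fromBlocks (-P) ((Aᵀ * (P - Cᵀ * Yᵀ))ᵀ) (Aᵀ * (P - Cᵀ * Yᵀ)) ((α - 1) • P))
        (Matrix.fromBlocks (Bᵀ * P) 0 Yᵀ 0)ᵀ
        (Matrix.fromBlocks (Bᵀ * P) 0 Yᵀ 0)
        (Matrix.fromBlocks (-(α * μ₁) • (1 : Matrix (Fin p) (Fin p) ℝ)) 0 0
          (-(α * μ₁) • (1 : Matrix (Fin m) (Fin m) ℝ))))).PosSemidef)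
    -- LMI (ii)
    (hLMI2 : (Matrix.fromBlocks P (1 : Matrix (Fin n) (Fin n) ℝ)
        (1 : Matrix (Fin n) (Fin n) ℝ) (μ₂ • (1 : Matrix (Fin n) (Fin n) ℝ))).PosSemidef)
    (L : Matrix (Fin n) (Fin m) ℝ) (hL : L = P⁻¹ * Y)
    (e : ℕ → Fin n → ℝ) (w₁ : ℕ → Fin p → ℝ) (w₂ : ℕ → Fin m → ℝ)
    (hbdd₁ : BddAbove (Set.range fun k => Real.sqrt (w₁ k ⬝ᵥ w₁ k)))
    (hbdd₂ : BddAbove (Set.range fun k => Real.sqrt (w₂ k ⬝ᵥ w₂ k)))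
    (hdyn : ∀ k, e (k + 1) = ((1 - L * C) * A) *ᵥ e k - B *ᵥ w₁ k - L *ᵥ w₂ (k + 1)) :
    ∀ k, Real.sqrt (e k ⬝ᵥ e k) ≤
      Real.sqrt (μ₂ * ⨆ i, hP.1.eigenvalues i) * Real.sqrt (1 - α) ^ k *
          Real.sqrt (e 0 ⬝ᵥ e 0) +
        Real.sqrt (μ₁ * μ₂) *
          ((⨆ k, Real.sqrt (w₁ k ⬝ᵥ w₁ k)) + ⨆ k, Real.sqrt (w₂ k ⬝ᵥ w₂ k)) := by
  obtain ⟨hα0, hα1⟩ := hα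
  have h1α : (0:ℝ) ≤ 1 - α := by linarith
  set W₁ : ℝ := ⨆ k, Real.sqrt (w₁ k ⬝ᵥ w₁ k) with hW₁def
  set W₂ : ℝ := ⨆ k, Real.sqrt (w₂ k ⬝ᵥ w₂ k) with hW₂def
  have hW₁0 : 0 ≤ W₁ := le_trans (Real.sqrt_nonneg _) (le_ciSup hbdd₁ 0)
  have hW₂0 : 0 ≤ W₂ := le_trans (Real.sqrt_nonneg _) (le_ciSup hbdd₂ 0)
  have hw₁ : ∀ k, w₁ k ⬝ᵥ w₁ k ≤ W₁ ^ 2 := by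
    intro k
    calc w₁ k ⬝ᵥ w₁ k = (Real.sqrt (w₁ k ⬝ᵥ w₁ k)) ^ 2 :=
          (Real.sq_sqrt (dot_self_nonneg' _)).symm
      _ ≤ W₁ ^ 2 := pow_le_pow_left₀ (Real.sqrt_nonneg _) (le_ciSup hbdd₁ k) 2
  have hw₂ : ∀ k, w₂ k ⬝ᵥ w₂ k ≤ W₂ ^ 2 := by
    intro k
    calc w₂ k ⬝ᵥ w₂ k = (Real.sqrt (w₂ k ⬝ᵥ w₂ k)) ^ 2 :=
          (Real.sq_sqrt (dot_self_nonneg' _)).symm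
      _ ≤ W₂ ^ 2 := pow_le_pow_left₀ (Real.sqrt_nonneg _) (le_ciSup hbdd₂ k) 2
  set V : ℕ → ℝ := fun k => e k ⬝ᵥ (P *ᵥ e k) with hV
  have hVnn : ∀ k, 0 ≤ V k := by
    intro k
    have := hP.posSemidef.dotProduct_mulVec_nonneg (e k)
    rwa [show star (e k) = e k from funext fun i => star_trivial _] at this
  have hstep : ∀ k, V (k+1) ≤ (1-α) * V k + α*μ₁*W₁^2 + α*μ₁*W₂^2 := by
    intro k
    have hb := lmi1_bound' A B C α μ₁ P hP Y hLMI1 (e k) (-(w₁ k)) (-(w₂ (k+1)))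
    have he : e (k+1) = ((1 - (P⁻¹ * Y) * C) * A) *ᵥ e k + B *ᵥ (-(w₁ k))
        + (P⁻¹ * Y) *ᵥ (-(w₂ (k+1))) := by
      rw [hdyn k, hL]
      simp [mulVec_neg, sub_eq_add_neg]
    rw [neg_dotProduct, dotProduct_neg, neg_neg, neg_dotProduct, dotProduct_neg, neg_neg] at hb
    have hαμ : 0 ≤ α * μ₁ := mul_nonneg hα0.le hμ₁.le
    have hm1 := mul_le_mul_of_nonneg_left (hw₁ k) hαμ
    have hm2 := mul_le_mul_of_nonneg_left (hw₂ (k+1)) hαμ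
    calc V (k+1) = e (k+1) ⬝ᵥ (P *ᵥ e (k+1)) := rfl
      _ ≤ (1 - α) * (e k ⬝ᵥ (P *ᵥ e k)) + α * μ₁ * (w₁ k ⬝ᵥ w₁ k)
            + α * μ₁ * (w₂ (k+1) ⬝ᵥ w₂ (k+1)) := by rw [he]; exact hb
      _ ≤ (1-α) * V k + α*μ₁*W₁^2 + α*μ₁*W₂^2 := by
          have : V k = e k ⬝ᵥ (P *ᵥ e k) := rfl
          linarith
  have hiter : ∀ k, V k ≤ (1-α)^k * V 0 + μ₁*(W₁^2 + W₂^2) := by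
    intro k
    induction k with
    | zero =>
      have : 0 ≤ μ₁ * (W₁^2 + W₂^2) := by positivity
      simp only [pow_zero, one_mul]
      linarith
    | succ k ih =>
      calc V (k+1) ≤ (1-α) * V k + α*μ₁*W₁^2 + α*μ₁*W₂^2 := hstep k
        _ ≤ (1-α) * ((1-α)^k * V 0 + μ₁*(W₁^2 + W₂^2)) + α*μ₁*W₁^2 + α*μ₁*W₂^2 := by
            linarith [mul_le_mul_of_nonneg_left ih h1α]
        _ = (1-α)^(k+1) * V 0 + μ₁*(W₁^2 + W₂^2) := by ring
  -- nonnegativity of the sup of eigenvalues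
  set lam : ℝ := ⨆ i, hP.1.eigenvalues i with hlam
  have hlam0 : 0 ≤ lam := by
    rcases Nat.eq_zero_or_pos n with hn | hn
    · subst hn
      rw [hlam, iSup_of_empty', Real.sSup_empty]
    · have hne : Nonempty (Fin n) := ⟨⟨0, hn⟩⟩
      refine le_trans ?_ (le_ciSup (Set.Finite.bddAbove (Set.finite_range _)) (⟨0, hn⟩ : Fin n))
      exact (hP.posSemidef.eigenvalues_nonneg _)
  intro k
  have hE : e k ⬝ᵥ e k ≤ (μ₂ * lam) * ((1-α)^k * (e 0 ⬝ᵥ e 0)) + μ₁*μ₂*(W₁^2 + W₂^2) := by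
    have h1 := lmi2_bound' μ₂ hμ₂ P hLMI2 (e k)
    have h3 := rayleigh' P hP.1 (e 0)
    have h4 : (1-α)^k * V 0 ≤ (1-α)^k * (lam * (e 0 ⬝ᵥ e 0)) :=
      mul_le_mul_of_nonneg_left h3 (pow_nonneg h1α k)
    have h5 : V k ≤ (1-α)^k * (lam * (e 0 ⬝ᵥ e 0)) + μ₁*(W₁^2 + W₂^2) :=
      le_trans (hiter k) (by linarith)
    calc e k ⬝ᵥ e k ≤ μ₂ * V k := h1
      _ ≤ μ₂ * ((1-α)^k * (lam * (e 0 ⬝ᵥ e 0)) + μ₁*(W₁^2 + W₂^2)) :=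
          mul_le_mul_of_nonneg_left h5 hμ₂.le
      _ = (μ₂ * lam) * ((1-α)^k * (e 0 ⬝ᵥ e 0)) + μ₁*μ₂*(W₁^2 + W₂^2) := by ring
  have hX0 : 0 ≤ (μ₂ * lam) * ((1-α)^k * (e 0 ⬝ᵥ e 0)) := by
    have := dot_self_nonneg' (e 0)
    positivity
  have hY0 : 0 ≤ μ₁*μ₂*(W₁^2 + W₂^2) := by positivity
  calc Real.sqrt (e k ⬝ᵥ e k)
      ≤ Real.sqrt ((μ₂ * lam) * ((1-α)^k * (e 0 ⬝ᵥ e 0)) + μ₁*μ₂*(W₁^2 + W₂^2)) :=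
        Real.sqrt_le_sqrt hE
    _ ≤ Real.sqrt ((μ₂ * lam) * ((1-α)^k * (e 0 ⬝ᵥ e 0)))
        + Real.sqrt (μ₁*μ₂*(W₁^2 + W₂^2)) := sqrt_add_le' hX0 hY0
    _ ≤ Real.sqrt (μ₂ * lam) * Real.sqrt (1 - α) ^ k * Real.sqrt (e 0 ⬝ᵥ e 0)
        + Real.sqrt (μ₁ * μ₂) * (W₁ + W₂) := by
        have hA : Real.sqrt ((μ₂ * lam) * ((1-α)^k * (e 0 ⬝ᵥ e 0)))
            = Real.sqrt (μ₂ * lam) * Real.sqrt (1 - α) ^ k * Real.sqrt (e 0 ⬝ᵥ e 0) := by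
          rw [Real.sqrt_mul (mul_nonneg hμ₂.le hlam0) ((1-α)^k * (e 0 ⬝ᵥ e 0)),
            Real.sqrt_mul (pow_nonneg h1α k) (e 0 ⬝ᵥ e 0), sqrt_pow' h1α, ← mul_assoc]
        have hB : Real.sqrt (μ₁*μ₂*(W₁^2 + W₂^2)) ≤ Real.sqrt (μ₁ * μ₂) * (W₁ + W₂) := by
          rw [Real.sqrt_mul (by positivity)]
          refine mul_le_mul_of_nonneg_left ?_ (Real.sqrt_nonneg _)
          calc Real.sqrt (W₁^2 + W₂^2) ≤ Real.sqrt ((W₁ + W₂)^2) :=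
                Real.sqrt_le_sqrt (by nlinarith)
            _ = W₁ + W₂ := Real.sqrt_sq (by positivity)
        linarith [hA.le, hA.ge, hB]
end

section
/- Let A ∈ ℝ^{n×n}, B ∈ ℝ^{n×p}, C ∈ ℝ^{m×n}, α ∈ (0,1), μ₁ > 0, P ∈ ℝ^{n×n} positive definite, and Y ∈ ℝ^{n×m}, and suppose the block matrix with rows [−P, *, *, *], [Aᵀ(P − CᵀYᵀ), (α−1)P, *, *], [BᵀP, 0, −αμ₁I, *], [Yᵀ, 0, 0, −αμ₁I] (filled symmetrically) is negative semidefinite. Set L = P^{−1}Y. Then for every e ∈ ℝ^{n}, w₁ ∈ ℝ^{p}, w₂ ∈ ℝ^{m}, the successor error e⁺ := (I − LC)A e − B w₁ − L w₂ satisfies e⁺ᵀ P e⁺ ≤ (1 − α) eᵀ P e + α μ₁ (w₁ᵀw₁ + w₂ᵀw₂). -/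
/-!
Evaluate the quadratic form of the LMI at `(e⁺, e, -w₁, -w₂)`. Because `Y = P L` and
`Aᵀ (P - Cᵀ Yᵀ) = ((I - L C) A)ᵀ P`, the off-diagonal terms add up to `2 e⁺ᵀ P e⁺`, so the form
equals `e⁺ᵀ P e⁺ - (1 - α) eᵀ P e - α μ₁ (w₁ᵀ w₁ + w₂ᵀ w₂)`, which the LMI makes nonpositive.
-/

open Matrix

namespace Matrix

variable {l m n R : Type*} [Fintype l] [Fintype m] [Fintype n] [CommSemiring R]

theorem dotProduct_transpose_mul_mulVec (F : Matrix m n R) (P : Matrix m l R) (y : n → R)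
    (x : l → R) : y ⬝ᵥ ((Fᵀ * P) *ᵥ x) = (F *ᵥ y) ⬝ᵥ (P *ᵥ x) := by
  rw [← mulVec_mulVec, dotProduct_transpose_mulVec, dotProduct_comm]

theorem sumElim_dotProduct_fromBlocks_transpose_mulVec
    (A : Matrix l l R) (C : Matrix m l R) (D : Matrix m m R) (x : l → R) (y : m → R) :
    Sum.elim x y ⬝ᵥ (fromBlocks A Cᵀ C D *ᵥ Sum.elim x y) =
      x ⬝ᵥ (A *ᵥ x) + 2 * (y ⬝ᵥ (C *ᵥ x)) + y ⬝ᵥ (D *ᵥ y) := by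
  rw [fromBlocks_mulVec, Sum.elim_comp_inl, Sum.elim_comp_inr, sumElim_dotProduct_sumElim,
    dotProduct_add, dotProduct_add, dotProduct_transpose_mulVec]
  ring

end Matrix

section ObserverLMI

variable {n p m : Type*} [Fintype n] [Fintype p] [Fintype m] [DecidableEq n]
  [DecidableEq p] [DecidableEq m]
  (A : Matrix n n ℝ) (B : Matrix n p ℝ) (C : Matrix m n ℝ) (α μ₁ : ℝ) (P : Matrix n n ℝ)
  (Y : Matrix n m ℝ)

def observerLMI : Matrix ((n ⊕ n) ⊕ (p ⊕ m)) ((n ⊕ n) ⊕ (p ⊕ m)) ℝ :=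
  fromBlocks
    (fromBlocks (-P) ((Aᵀ * (P - Cᵀ * Yᵀ))ᵀ) (Aᵀ * (P - Cᵀ * Yᵀ)) ((α - 1) • P))
    (fromBlocks (Bᵀ * P) 0 Yᵀ 0)ᵀ
    (fromBlocks (Bᵀ * P) 0 Yᵀ 0)
    (fromBlocks (-(α * μ₁) • (1 : Matrix p p ℝ)) 0 0 (-(α * μ₁) • (1 : Matrix m m ℝ)))

theorem observerLMI_quadForm {L : Matrix n m ℝ} (hPt : Pᵀ = P) (hY : P * L = Y)
    (x e : n → ℝ) (u : p → ℝ) (v : m → ℝ) :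
    Sum.elim (Sum.elim x e) (Sum.elim u v) ⬝ᵥ
        (observerLMI A B C α μ₁ P Y *ᵥ Sum.elim (Sum.elim x e) (Sum.elim u v)) =
      -(x ⬝ᵥ (P *ᵥ x)) + 2 * ((((1 - L * C) * A) *ᵥ e + B *ᵥ u + L *ᵥ v) ⬝ᵥ (P *ᵥ x))
        + (α - 1) * (e ⬝ᵥ (P *ᵥ e)) - α * μ₁ * (u ⬝ᵥ u + v ⬝ᵥ v) := by
  have hM : Aᵀ * (P - Cᵀ * Yᵀ) = ((1 - L * C) * A)ᵀ * P := by
    rw [← hY, transpose_mul, transpose_mul, hPt, transpose_sub, transpose_one, transpose_mul]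
    simp only [Matrix.mul_sub, Matrix.sub_mul, Matrix.mul_one, Matrix.mul_assoc]
  have hYt : Yᵀ = Lᵀ * P := by rw [← hY, transpose_mul, hPt]
  rw [observerLMI, sumElim_dotProduct_fromBlocks_transpose_mulVec,
    sumElim_dotProduct_fromBlocks_transpose_mulVec, fromBlocks_mulVec, fromBlocks_mulVec, hM, hYt]
  simp only [Sum.elim_comp_inl, Sum.elim_comp_inr, sumElim_dotProduct_sumElim,
    zero_mulVec, add_zero, zero_add, neg_mulVec, smul_mulVec, one_mulVec, dotProduct_neg,
    dotProduct_smul, smul_eq_mul, add_dotProduct]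
  rw [dotProduct_transpose_mul_mulVec, dotProduct_transpose_mul_mulVec,
    dotProduct_transpose_mul_mulVec]
  ring

end ObserverLMI

theorem stmt5_general {n p m : ℕ}
    (A : Matrix (Fin n) (Fin n) ℝ) (B : Matrix (Fin n) (Fin p) ℝ)
    (C : Matrix (Fin m) (Fin n) ℝ)
    (α μ₁ : ℝ)
    (P : Matrix (Fin n) (Fin n) ℝ) (hP : P.PosDef) (Y : Matrix (Fin n) (Fin m) ℝ)
    (hLMI : (-(Matrix.fromBlocks
        (Matrix.fromBlocks (-P) ((Aᵀ * (P - Cᵀ * Yᵀ))ᵀ) (Aᵀ * (P - Cᵀ * Yᵀ)) ((α - 1) • P))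
        (Matrix.fromBlocks (Bᵀ * P) 0 Yᵀ 0)ᵀ
        (Matrix.fromBlocks (Bᵀ * P) 0 Yᵀ 0)
        (Matrix.fromBlocks (-(α * μ₁) • (1 : Matrix (Fin p) (Fin p) ℝ)) 0 0
          (-(α * μ₁) • (1 : Matrix (Fin m) (Fin m) ℝ))))).PosSemidef)
    (L : Matrix (Fin n) (Fin m) ℝ) (hL : L = P⁻¹ * Y)
    (e : Fin n → ℝ) (w₁ : Fin p → ℝ) (w₂ : Fin m → ℝ) :
    (((1 - L * C) * A) *ᵥ e - B *ᵥ w₁ - L *ᵥ w₂) ⬝ᵥ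
        (P *ᵥ (((1 - L * C) * A) *ᵥ e - B *ᵥ w₁ - L *ᵥ w₂)) ≤
      (1 - α) * (e ⬝ᵥ (P *ᵥ e)) + α * μ₁ * (w₁ ⬝ᵥ w₁ + w₂ ⬝ᵥ w₂) := by
  have hY : P * L = Y := by
    rw [hL, mul_nonsing_inv_cancel_left _ _ ((isUnit_iff_isUnit_det P).mp hP.isUnit)]
  set eNext := ((1 - L * C) * A) *ᵥ e - B *ᵥ w₁ - L *ᵥ w₂
  have hNext : ((1 - L * C) * A) *ᵥ e + B *ᵥ (-w₁) + L *ᵥ (-w₂) = eNext := by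
    simp only [mulVec_neg, ← sub_eq_add_neg, eNext]
  have hNonpos :=
    hLMI.dotProduct_mulVec_nonneg (Sum.elim (Sum.elim eNext e) (Sum.elim (-w₁) (-w₂)))
  rw [star_trivial, neg_mulVec, dotProduct_neg, ← observerLMI,
    observerLMI_quadForm A B C α μ₁ P Y hP.isHermitian hY, hNext] at hNonpos
  simp only [neg_dotProduct_neg] at hNonpos
  linarith

/-- One-step dissipation inequality for the observer error: if the 4×4
block LMI is negative semidefinite (expressed as `(-(·)).PosSemidef`) and `L = P⁻¹Y`, then
the successor error `e⁺ = (I - LC)A e - B w₁ - L w₂` satisfies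
`e⁺ᵀ P e⁺ ≤ (1-α) eᵀ P e + α μ₁ (w₁ᵀw₁ + w₂ᵀw₂)`. -/
theorem stmt5 {n p m : ℕ}
    (A : Matrix (Fin n) (Fin n) ℝ) (B : Matrix (Fin n) (Fin p) ℝ)
    (C : Matrix (Fin m) (Fin n) ℝ)
    (α μ₁ : ℝ) (hα : α ∈ Set.Ioo (0 : ℝ) 1) (hμ₁ : 0 < μ₁)
    (P : Matrix (Fin n) (Fin n) ℝ) (hP : P.PosDef) (Y : Matrix (Fin n) (Fin m) ℝ)
    (hLMI : (-(Matrix.fromBlocks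
        (Matrix.fromBlocks (-P) ((Aᵀ * (P - Cᵀ * Yᵀ))ᵀ) (Aᵀ * (P - Cᵀ * Yᵀ)) ((α - 1) • P))
        (Matrix.fromBlocks (Bᵀ * P) 0 Yᵀ 0)ᵀ
        (Matrix.fromBlocks (Bᵀ * P) 0 Yᵀ 0)
        (Matrix.fromBlocks (-(α * μ₁) • (1 : Matrix (Fin p) (Fin p) ℝ)) 0 0
          (-(α * μ₁) • (1 : Matrix (Fin m) (Fin m) ℝ))))).PosSemidef)
    (L : Matrix (Fin n) (Fin m) ℝ) (hL : L = P⁻¹ * Y)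
    (e : Fin n → ℝ) (w₁ : Fin p → ℝ) (w₂ : Fin m → ℝ) :
    (((1 - L * C) * A) *ᵥ e - B *ᵥ w₁ - L *ᵥ w₂) ⬝ᵥ
        (P *ᵥ (((1 - L * C) * A) *ᵥ e - B *ᵥ w₁ - L *ᵥ w₂)) ≤
      (1 - α) * (e ⬝ᵥ (P *ᵥ e)) + α * μ₁ * (w₁ ⬝ᵥ w₁ + w₂ ⬝ᵥ w₂) :=
  stmt5_general A B C α μ₁ P hP Y hLMI L hL e w₁ w₂
end

section
/- Let A_e ∈ ℝ^{n×n}, C_e ∈ ℝ^{m×n}, let Π ∈ ℝ^{m×m} be positive definite, and let γ, ω̄₂, ω̄₃ > 0. Suppose there exist λ₁, λ₂ > 0 such that the block matrix [[f₁, *, *],[Π C_e A_e, f₂, *],[0, 0, f₃]] (filled symmetrically) is positive semidefinite, where f₁ = λ₁ I − A_eᵀ C_eᵀ Π C_e A_e, f₂ = λ₂ I − Π, and f₃ = 1 − λ₁ γ² (ω̄₂ + ω̄₃) − λ₂ ω̄₃. Then for every e ∈ ℝ^{n} with eᵀe ≤ γ²(ω̄₂ + ω̄₃) and every ω ∈ ℝ^{m}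 with ωᵀω ≤ ω̄₃, the residual r := C_e A_e e + ω satisfies rᵀ Π r ≤ 1. -/
open Matrix

private lemma aux_mv {p q : ℕ} (M : Matrix (Fin p) (Fin q) ℝ) (x : Fin q → ℝ) (y : Fin p → ℝ) :
    (M *ᵥ x) ⬝ᵥ y = x ⬝ᵥ (Mᵀ *ᵥ y) := by
  rw [Matrix.dotProduct_mulVec, Matrix.vecMul_transpose]

/-- Monitor ellipsoid containment via the S-procedure: if the 3×3 block
matrix `[[f₁, *, *],[Π CₑAₑ, f₂, *],[0, 0, f₃]]` (bottom-right block the 1×1 scalar `f₃`,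
filled symmetrically) is positive semidefinite, where `f₁ = λ₁I - AₑᵀCₑᵀ Π CₑAₑ`,
`f₂ = λ₂I - Π`, `f₃ = 1 - λ₁γ²(ω̄₂+ω̄₃) - λ₂ω̄₃`, then every residual `r = CₑAₑ e + ω`
with `eᵀe ≤ γ²(ω̄₂+ω̄₃)` and `ωᵀω ≤ ω̄₃` satisfies `rᵀ Π r ≤ 1`. -/
theorem stmt8 {n m : ℕ}
    (Ae : Matrix (Fin n) (Fin n) ℝ) (Ce : Matrix (Fin m) (Fin n) ℝ)
    (Pm : Matrix (Fin m) (Fin m) ℝ) (hPm : Pm.PosDef)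
    (γ ω₂ ω₃ : ℝ) (hγ : 0 < γ) (hω₂ : 0 < ω₂) (hω₃ : 0 < ω₃)
    (l₁ l₂ : ℝ) (hl₁ : 0 < l₁) (hl₂ : 0 < l₂)
    (hLMI : (Matrix.fromBlocks
        (Matrix.fromBlocks
          (l₁ • (1 : Matrix (Fin n) (Fin n) ℝ) - Aeᵀ * Ceᵀ * Pm * Ce * Ae)
          ((Pm * Ce * Ae)ᵀ) (Pm * Ce * Ae) (l₂ • (1 : Matrix (Fin m) (Fin m) ℝ) - Pm))
        (0 : Matrix (Fin n ⊕ Fin m) (Fin 1) ℝ)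
        (0 : Matrix (Fin 1) (Fin n ⊕ Fin m) ℝ)
        ((1 - l₁ * γ ^ 2 * (ω₂ + ω₃) - l₂ * ω₃) • (1 : Matrix (Fin 1) (Fin 1) ℝ))).PosSemidef)
    (e : Fin n → ℝ) (he : e ⬝ᵥ e ≤ γ ^ 2 * (ω₂ + ω₃))
    (ω : Fin m → ℝ) (hω : ω ⬝ᵥ ω ≤ ω₃) :
    ((Ce * Ae) *ᵥ e + ω) ⬝ᵥ (Pm *ᵥ ((Ce * Ae) *ᵥ e + ω)) ≤ 1 := by
  have hsym : Pmᵀ = Pm := hPm.1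
  have h := hLMI.dotProduct_mulVec_nonneg (Sum.elim (Sum.elim (-e) ω) (fun _ => (1:ℝ)))
  rw [star_trivial] at h
  simp only [Matrix.fromBlocks_mulVec, sumElim_dotProduct_sumElim,
    Matrix.zero_mulVec, add_zero, zero_add, Matrix.sub_mulVec, Matrix.smul_mulVec,
    Matrix.one_mulVec, dotProduct_add, dotProduct_sub, dotProduct_smul, smul_eq_mul,
    Sum.elim_comp_inl, Sum.elim_comp_inr, Matrix.mulVec_neg, dotProduct_neg, neg_dotProduct,
    neg_neg, ← Matrix.dotProduct_mulVec] at h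
  simp only [Matrix.mulVec_add, dotProduct_add, add_dotProduct, aux_mv,
    Matrix.mulVec_mulVec, Matrix.transpose_mul, Matrix.transpose_transpose, hsym,
    Matrix.mul_assoc] at h ⊢
  have hd : (fun _ : Fin 1 => (1:ℝ)) ⬝ᵥ (fun _ => (1:ℝ)) = 1 := by
    simp [dotProduct]
  rw [hd] at h
  have h1 : l₁ * (e ⬝ᵥ e) ≤ l₁ * (γ ^ 2 * (ω₂ + ω₃)) := mul_le_mul_of_nonneg_left he hl₁.le
  have h2 : l₂ * (ω ⬝ᵥ ω) ≤ l₂ * ω₃ := mul_le_mul_of_nonneg_left hω hl₂.le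
  have h3 : l₁ * γ ^ 2 * (ω₂ + ω₃) = l₁ * (γ ^ 2 * (ω₂ + ω₃)) := by ring
  rw [h3] at h
  linarith
end

section
/- Let A ∈ ℝ^{4×4}, B ∈ ℝ^{4×3}, Γ ∈ ℝ^{4×1}, A_e ∈ ℝ^{6×6}, B_{e1} ∈ ℝ^{6×1}, C_e ∈ ℝ^{5×6}, L ∈ ℝ^{6×5}, and set Ā := (I − L C_e) A_e and M := C_e A_e B_{e1}. Assume M has full column rank and let M† := (MᵀM)^{−1}Mᵀ be its Moore–Penrose inverse. Suppose the sequences x(k) ∈ ℝ^{4}, e(k) ∈ ℝ^{6}, r(k) ∈ ℝ^{5} and signals w̃(k) ∈ ℝ^{3}, w_u(k) ∈ ℝ, ω_e(k) ∈ ℝ^{5}, δ(k) ∈ ℝ satisfy x(k+1) = A x(k) + B w̃(k) + Γ δ(k), e(k+1) = Ā e(k) − B_{e1} w_u(k) − B_{e1} δ(k) − L ω_e(k+1), and r(k+1) = C_e A_e e(k) + ω_e(k+1) for all k. Then the extended state ζ(k) := (x(k), e(k)) ∈ ℝ^{10} satisfies, for all k, ζ(k+1) = 𝒜 ζ(k)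 + ℬ₁ w̃(k) + ℬ₂ w_u(k) + ℬ₃ ω_e(k+1) + ℬ₄ ω_e(k+2) + ℬ₅ r(k+2), where 𝒜 = [[A, Γ M† C_e A_e Ā],[0, (I − B_{e1} M† C_e A_e) Ā]], ℬ₁ = [B; 0], ℬ₂ = [−Γ; 0], ℬ₃ = [−Γ M† C_e A_e L; (B_{e1} M† C_e A_e − I) L], ℬ₄ = [Γ M†; −B_{e1} M†], ℬ₅ = [−Γ M†; B_{e1} M†]. -/
open Matrix

/-- Reformulation of the closed-loop CAV dynamics under a stealthy FDI
attack: eliminating the attack signal `δ` via the residual equation, the extended state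
`ζ(k) = (x(k), e(k))` satisfies the LTI dynamics driven by the perturbations and the
residual, with the block matrices `𝒜, ℬ₁, …, ℬ₅` of the paper. Here
`Ā = (I - LCₑ)Aₑ`, `M = CₑAₑB_{e1}` has full column rank, and `M† = (MᵀM)⁻¹Mᵀ`. -/
theorem stmt9
    (A : Matrix (Fin 4) (Fin 4) ℝ) (B : Matrix (Fin 4) (Fin 3) ℝ)
    (Γ : Matrix (Fin 4) (Fin 1) ℝ)
    (Ae : Matrix (Fin 6) (Fin 6) ℝ) (Be1 : Matrix (Fin 6) (Fin 1) ℝ)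
    (Ce : Matrix (Fin 5) (Fin 6) ℝ) (L : Matrix (Fin 6) (Fin 5) ℝ)
    (Abar : Matrix (Fin 6) (Fin 6) ℝ) (hAbar : Abar = (1 - L * Ce) * Ae)
    (M : Matrix (Fin 5) (Fin 1) ℝ) (hM : M = Ce * Ae * Be1)
    (hrank : M.rank = 1)
    (Md : Matrix (Fin 1) (Fin 5) ℝ) (hMd : Md = (Mᵀ * M)⁻¹ * Mᵀ)
    (x : ℕ → Fin 4 → ℝ) (e : ℕ → Fin 6 → ℝ) (r : ℕ → Fin 5 → ℝ)
    (wt : ℕ → Fin 3 → ℝ) (wu : ℕ → Fin 1 → ℝ) (ωe : ℕ → Fin 5 → ℝ) (δ : ℕ → Fin 1 → ℝ)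
    (hx : ∀ k, x (k + 1) = A *ᵥ x k + B *ᵥ wt k + Γ *ᵥ δ k)
    (he : ∀ k, e (k + 1) = Abar *ᵥ e k - Be1 *ᵥ wu k - Be1 *ᵥ δ k - L *ᵥ ωe (k + 1))
    (hr : ∀ k, r (k + 1) = (Ce * Ae) *ᵥ e k + ωe (k + 1)) :
    ∀ k, Sum.elim (x (k + 1)) (e (k + 1)) =
      (Matrix.fromBlocks A (Γ * Md * (Ce * Ae) * Abar)
          (0 : Matrix (Fin 6) (Fin 4) ℝ) ((1 - Be1 * Md * (Ce * Ae)) * Abar))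
          *ᵥ Sum.elim (x k) (e k)
      + Matrix.fromRows B (0 : Matrix (Fin 6) (Fin 3) ℝ) *ᵥ wt k
      + Matrix.fromRows (-Γ) (0 : Matrix (Fin 6) (Fin 1) ℝ) *ᵥ wu k
      + Matrix.fromRows (-(Γ * Md * (Ce * Ae) * L)) ((Be1 * Md * (Ce * Ae) - 1) * L)
          *ᵥ ωe (k + 1)
      + Matrix.fromRows (Γ * Md) (-(Be1 * Md)) *ᵥ ωe (k + 2)
      + Matrix.fromRows (-(Γ * Md)) (Be1 * Md) *ᵥ r (k + 2) := by
  -- M ≠ 0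
  have hM0 : M ≠ 0 := by
    intro h
    rw [h, Matrix.rank_zero] at hrank
    exact one_ne_zero hrank.symm
  -- MᵀM invertible (1×1)
  have hdet : IsUnit (Mᵀ * M).det := by
    rw [Matrix.det_fin_one, isUnit_iff_ne_zero]
    intro h
    apply hM0
    have h00 : (Mᵀ * M) 0 0 = ∑ i, M i 0 ^ 2 := by
      simp [Matrix.mul_apply, Matrix.transpose_apply, sq]
    rw [h00] at h
    have hall : ∀ i, M i 0 = 0 := by
      intro i
      have := (Finset.sum_eq_zero_iff_of_nonneg (fun i _ => sq_nonneg (M i 0))).mp h i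
        (Finset.mem_univ i)
      exact pow_eq_zero_iff (n := 2) (by norm_num) |>.mp this
    ext i j
    have : j = 0 := Subsingleton.elim j 0
    simp [this, hall i]
  have hMdM : Md * M = 1 := by
    rw [hMd, Matrix.mul_assoc, Matrix.nonsing_inv_mul _ hdet]
  intro k
  -- solve for δ k from the residual equation at k+2
  have hδ : M *ᵥ δ k = (Ce * Ae * Abar) *ᵥ e k - M *ᵥ wu k
      - (Ce * Ae * L) *ᵥ ωe (k + 1) + ωe (k + 2) - r (k + 2) := by
    have h2 : r (k + 2) = (Ce * Ae) *ᵥ e (k + 1) + ωe (k + 2) := hr (k + 1)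
    rw [he k] at h2
    rw [h2]
    simp only [Matrix.mulVec_sub, Matrix.mulVec_mulVec, ← hM]
    abel
  have hδ' : δ k = (Md * (Ce * Ae * Abar)) *ᵥ e k - wu k
      - (Md * (Ce * Ae * L)) *ᵥ ωe (k + 1) + Md *ᵥ ωe (k + 2) - Md *ᵥ r (k + 2) := by
    have := congrArg (fun v => Md *ᵥ v) hδ
    simp only [Matrix.mulVec_mulVec, hMdM, Matrix.one_mulVec, Matrix.mulVec_sub,
      Matrix.mulVec_add] at this
    convert this using 2
  ext (i | i) <;>
    simp only [Sum.elim_inl, Sum.elim_inr, Pi.add_apply, Matrix.fromBlocks_mulVec,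
      Matrix.fromRows_mulVec, hx k, he k, hδ']
  · simp only [Sum.elim_inl, Pi.add_apply, Pi.sub_apply, Matrix.mulVec_add, Matrix.mulVec_sub,
      Matrix.mulVec_mulVec, Matrix.neg_mulVec, Matrix.sub_mulVec, Matrix.add_mulVec,
      Matrix.zero_mulVec, Matrix.one_mulVec, Matrix.sub_mul, Matrix.one_mul,
      Sum.elim_comp_inl, Sum.elim_comp_inr, Matrix.mul_assoc, Pi.neg_apply, Pi.zero_apply]
    ring
  · simp only [Sum.elim_inr, Pi.add_apply, Pi.sub_apply, Matrix.mulVec_add, Matrix.mulVec_sub,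
      Matrix.mulVec_mulVec, Matrix.neg_mulVec, Matrix.sub_mulVec, Matrix.add_mulVec,
      Matrix.zero_mulVec, Matrix.one_mulVec, Matrix.sub_mul, Matrix.one_mul,
      Sum.elim_comp_inl, Sum.elim_comp_inr, Matrix.mul_assoc, Pi.neg_apply, Pi.zero_apply]
    ring
end

section
/- Consider the discrete-time system ζ(k+1) = 𝒜 ζ(k) + ℬ₁ w₁(k) + ℬ₂ w₂(k) + ℬ₃ w₃(k) + ℬ₄ w₄(k) + ℬ₅ w₅(k) with ζ(k) ∈ ℝ^{10}, where w₁(k) ∈ ℝ³ satisfies w₁ᵀw₁ ≤ ω̄₁, w₂(k) ∈ ℝ satisfies w₂² ≤ ω̄₂, w₃(k), w₄(k) ∈ ℝ⁵ satisfy w₃ᵀw₃ ≤ ω̄₃ and w₄ᵀw₄ ≤ ω̄₃, and w₅(k) ∈ ℝ⁵ satisfies w₅ᵀ Π w₅ ≤ 1 for a positive definite Π ∈ ℝ^{5×5}, and ω̄₁, ω̄₂, ω̄₃ > 0. Let a ∈ (0,1). Suppose there exist a₁,…,a₅ ∈ (0,1) with a₁+…+a₅ ≥ a and a positive definite P ∈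 ℝ^{10×10} such that the block matrix [[aP, 𝒜ᵀP, 0],[P𝒜, P, Pℬ],[0, ℬᵀP, W_a]] is positive semidefinite, where ℬ = [ℬ₁ … ℬ₅] ∈ ℝ^{10×19} and W_a = diag((1−a₁)(1/ω̄₁)I₃, (1−a₂)(1/ω̄₂), (1−a₃)(1/ω̄₃)I₅, (1−a₄)(1/ω̄₃)I₅, (1−a₅)Π). Then for every k ≥ 1 and every trajectory starting from ζ(1) with admissible perturbations, ζ(k)ᵀ P ζ(k) ≤ α_k := a^{k−1} ζ(1)ᵀ P ζ(1) + (5−a)(1−a^{k−1})/(1−a). -/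
open Matrix

lemma symdot (P : Matrix (Fin 10) (Fin 10) ℝ) (hP : Pᵀ = P) (x y : Fin 10 → ℝ) :
    x ⬝ᵥ (P *ᵥ y) = y ⬝ᵥ (P *ᵥ x) := by
  rw [dotProduct_mulVec, ← vecMul_transpose, hP, dotProduct_comm, ← mulVec_transpose, hP]

lemma keystep
    (𝒜 : Matrix (Fin 10) (Fin 10) ℝ)
    (ℬ₁ : Matrix (Fin 10) (Fin 3) ℝ) (ℬ₂ : Matrix (Fin 10) (Fin 1) ℝ)
    (ℬ₃ : Matrix (Fin 10) (Fin 5) ℝ) (ℬ₄ : Matrix (Fin 10) (Fin 5) ℝ)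
    (ℬ₅ : Matrix (Fin 10) (Fin 5) ℝ)
    (Pm : Matrix (Fin 5) (Fin 5) ℝ)
    (ω₁ ω₂ ω₃ a a₁ a₂ a₃ a₄ a₅ : ℝ)
    (P : Matrix (Fin 10) (Fin 10) ℝ) (hP : Pᵀ = P)
    (hLMI : (Matrix.fromBlocks
        (Matrix.fromBlocks (a • P) (𝒜ᵀ * P) (P * 𝒜) P)
        (Matrix.fromRows 0
          (P * Matrix.fromCols ℬ₁ (Matrix.fromCols ℬ₂
            (Matrix.fromCols ℬ₃ (Matrix.fromCols ℬ₄ ℬ₅)))))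
        (Matrix.fromCols 0
          ((Matrix.fromCols ℬ₁ (Matrix.fromCols ℬ₂
            (Matrix.fromCols ℬ₃ (Matrix.fromCols ℬ₄ ℬ₅))))ᵀ * P))
        (Matrix.fromBlocks
          ((1 - a₁) • (ω₁⁻¹ • (1 : Matrix (Fin 3) (Fin 3) ℝ))) 0 0
          (Matrix.fromBlocks
            ((1 - a₂) • (ω₂⁻¹ • (1 : Matrix (Fin 1) (Fin 1) ℝ))) 0 0
            (Matrix.fromBlocks
              ((1 - a₃) • (ω₃⁻¹ • (1 : Matrix (Fin 5) (Fin 5) ℝ))) 0 0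
              (Matrix.fromBlocks
                ((1 - a₄) • (ω₃⁻¹ • (1 : Matrix (Fin 5) (Fin 5) ℝ))) 0 0
                ((1 - a₅) • Pm)))))).PosSemidef)
    (x : Fin 10 → ℝ) (v₁ : Fin 3 → ℝ) (v₂ : Fin 1 → ℝ) (v₃ v₄ v₅ : Fin 5 → ℝ) :
    (𝒜 *ᵥ x + ℬ₁ *ᵥ v₁ + ℬ₂ *ᵥ v₂ + ℬ₃ *ᵥ v₃ + ℬ₄ *ᵥ v₄ + ℬ₅ *ᵥ v₅) ⬝ᵥ
      (P *ᵥ (𝒜 *ᵥ x + ℬ₁ *ᵥ v₁ + ℬ₂ *ᵥ v₂ + ℬ₃ *ᵥ v₃ + ℬ₄ *ᵥ v₄ + ℬ₅ *ᵥ v₅)) ≤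
    a * (x ⬝ᵥ (P *ᵥ x)) + (1 - a₁) * ω₁⁻¹ * (v₁ ⬝ᵥ v₁) + (1 - a₂) * ω₂⁻¹ * (v₂ ⬝ᵥ v₂)
      + (1 - a₃) * ω₃⁻¹ * (v₃ ⬝ᵥ v₃) + (1 - a₄) * ω₃⁻¹ * (v₄ ⬝ᵥ v₄)
      + (1 - a₅) * (v₅ ⬝ᵥ (Pm *ᵥ v₅)) := by
  set z : Fin 10 → ℝ := 𝒜 *ᵥ x + ℬ₁ *ᵥ v₁ + ℬ₂ *ᵥ v₂ + ℬ₃ *ᵥ v₃ + ℬ₄ *ᵥ v₄ + ℬ₅ *ᵥ v₅ with hz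
  have h0 := hLMI.dotProduct_mulVec_nonneg (Sum.elim (Sum.elim x (-z))
    (Sum.elim v₁ (Sum.elim v₂ (Sum.elim v₃ (Sum.elim v₄ v₅)))))
  rw [star_trivial] at h0
  simp only [fromBlocks_mulVec, fromRows_mulVec, fromCols_mulVec_sumElim,
    Sum.elim_comp_inl, Sum.elim_comp_inr, sumElim_dotProduct_sumElim,
    smul_mulVec, one_mulVec, zero_mulVec, mulVec_zero, zero_add, add_zero,
    dotProduct_add, dotProduct_smul, smul_eq_mul, dotProduct_neg, neg_dotProduct,
    mulVec_neg, ← mulVec_mulVec] at h0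
  rw [dotProduct_zero] at h0
  have e1 : x ⬝ᵥ 𝒜ᵀ *ᵥ P *ᵥ z = (𝒜 *ᵥ x) ⬝ᵥ (P *ᵥ z) := by
    rw [dotProduct_mulVec, vecMul_transpose]
  have e2 : z ⬝ᵥ P *ᵥ (𝒜 *ᵥ x) = (𝒜 *ᵥ x) ⬝ᵥ (P *ᵥ z) := symdot P hP z _
  have e3 : z ⬝ᵥ P *ᵥ (ℬ₁ *ᵥ v₁ + (ℬ₂ *ᵥ v₂ + (ℬ₃ *ᵥ v₃ + (ℬ₄ *ᵥ v₄ + ℬ₅ *ᵥ v₅)))) =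
      (ℬ₁ *ᵥ v₁ + (ℬ₂ *ᵥ v₂ + (ℬ₃ *ᵥ v₃ + (ℬ₄ *ᵥ v₄ + ℬ₅ *ᵥ v₅)))) ⬝ᵥ (P *ᵥ z) :=
    symdot P hP z _
  have e4 : (v₁ ⊕ᵥ (v₂ ⊕ᵥ (v₃ ⊕ᵥ (v₄ ⊕ᵥ v₅)))) ⬝ᵥ
      (ℬ₁.fromCols (ℬ₂.fromCols (ℬ₃.fromCols (ℬ₄.fromCols ℬ₅))))ᵀ *ᵥ P *ᵥ z =
      (ℬ₁ *ᵥ v₁ + (ℬ₂ *ᵥ v₂ + (ℬ₃ *ᵥ v₃ + (ℬ₄ *ᵥ v₄ + ℬ₅ *ᵥ v₅)))) ⬝ᵥ (P *ᵥ z) := by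
    rw [dotProduct_mulVec, vecMul_transpose, fromCols_mulVec_sumElim,
      fromCols_mulVec_sumElim, fromCols_mulVec_sumElim, fromCols_mulVec_sumElim]
  rw [e1, e2, e3, e4] at h0
  have e5 : (𝒜 *ᵥ x) ⬝ᵥ (P *ᵥ z) +
      (ℬ₁ *ᵥ v₁ + (ℬ₂ *ᵥ v₂ + (ℬ₃ *ᵥ v₃ + (ℬ₄ *ᵥ v₄ + ℬ₅ *ᵥ v₅)))) ⬝ᵥ (P *ᵥ z) =
      z ⬝ᵥ (P *ᵥ z) := by
    rw [← add_dotProduct]; congr 1; rw [hz]; abel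
  linarith


/-- Outer ellipsoidal approximation of the stealthy attacker's reachable
set: for the system `ζ(k+1) = 𝒜ζ(k) + ℬ₁w₁(k) + … + ℬ₅w₅(k)` with `w₁ᵀw₁ ≤ ω̄₁`,
`w₂² ≤ ω̄₂`, `w₃ᵀw₃ ≤ ω̄₃`, `w₄ᵀw₄ ≤ ω̄₃`, `w₅ᵀΠw₅ ≤ 1`, if the LMI (with
`ℬ = [ℬ₁ … ℬ₅]` and `W_a = diag((1-a₁)(1/ω̄₁)I₃, (1-a₂)(1/ω̄₂), (1-a₃)(1/ω̄₃)I₅,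
(1-a₄)(1/ω̄₃)I₅, (1-a₅)Π)`) holds, then every trajectory satisfies
`ζ(k)ᵀPζ(k) ≤ a^{k-1} ζ(1)ᵀPζ(1) + (5-a)(1-a^{k-1})/(1-a)` for all `k ≥ 1`. -/
theorem stmt10
    (𝒜 : Matrix (Fin 10) (Fin 10) ℝ)
    (ℬ₁ : Matrix (Fin 10) (Fin 3) ℝ) (ℬ₂ : Matrix (Fin 10) (Fin 1) ℝ)
    (ℬ₃ : Matrix (Fin 10) (Fin 5) ℝ) (ℬ₄ : Matrix (Fin 10) (Fin 5) ℝ)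
    (ℬ₅ : Matrix (Fin 10) (Fin 5) ℝ)
    (Pm : Matrix (Fin 5) (Fin 5) ℝ) (hPm : Pm.PosDef)
    (ω₁ ω₂ ω₃ : ℝ) (hω₁ : 0 < ω₁) (hω₂ : 0 < ω₂) (hω₃ : 0 < ω₃)
    (a : ℝ) (ha : a ∈ Set.Ioo (0 : ℝ) 1)
    (a₁ a₂ a₃ a₄ a₅ : ℝ)
    (ha₁ : a₁ ∈ Set.Ioo (0 : ℝ) 1) (ha₂ : a₂ ∈ Set.Ioo (0 : ℝ) 1)
    (ha₃ : a₃ ∈ Set.Ioo (0 : ℝ) 1) (ha₄ : a₄ ∈ Set.Ioo (0 : ℝ) 1)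
    (ha₅ : a₅ ∈ Set.Ioo (0 : ℝ) 1)
    (hsum : a ≤ a₁ + a₂ + a₃ + a₄ + a₅)
    (P : Matrix (Fin 10) (Fin 10) ℝ) (hP : P.PosDef)
    (hLMI : (Matrix.fromBlocks
        (Matrix.fromBlocks (a • P) (𝒜ᵀ * P) (P * 𝒜) P)
        (Matrix.fromRows 0
          (P * Matrix.fromCols ℬ₁ (Matrix.fromCols ℬ₂
            (Matrix.fromCols ℬ₃ (Matrix.fromCols ℬ₄ ℬ₅)))))
        (Matrix.fromCols 0
          ((Matrix.fromCols ℬ₁ (Matrix.fromCols ℬ₂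
            (Matrix.fromCols ℬ₃ (Matrix.fromCols ℬ₄ ℬ₅))))ᵀ * P))
        (Matrix.fromBlocks
          ((1 - a₁) • (ω₁⁻¹ • (1 : Matrix (Fin 3) (Fin 3) ℝ))) 0 0
          (Matrix.fromBlocks
            ((1 - a₂) • (ω₂⁻¹ • (1 : Matrix (Fin 1) (Fin 1) ℝ))) 0 0
            (Matrix.fromBlocks
              ((1 - a₃) • (ω₃⁻¹ • (1 : Matrix (Fin 5) (Fin 5) ℝ))) 0 0
              (Matrix.fromBlocks
                ((1 - a₄) • (ω₃⁻¹ • (1 : Matrix (Fin 5) (Fin 5) ℝ))) 0 0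
                ((1 - a₅) • Pm)))))).PosSemidef)
    (ζ : ℕ → Fin 10 → ℝ)
    (w₁ : ℕ → Fin 3 → ℝ) (w₂ : ℕ → Fin 1 → ℝ) (w₃ : ℕ → Fin 5 → ℝ)
    (w₄ : ℕ → Fin 5 → ℝ) (w₅ : ℕ → Fin 5 → ℝ)
    (hdyn : ∀ k ≥ 1, ζ (k + 1) = 𝒜 *ᵥ ζ k + ℬ₁ *ᵥ w₁ k + ℬ₂ *ᵥ w₂ k + ℬ₃ *ᵥ w₃ k
        + ℬ₄ *ᵥ w₄ k + ℬ₅ *ᵥ w₅ k)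
    (hw₁ : ∀ k, w₁ k ⬝ᵥ w₁ k ≤ ω₁) (hw₂ : ∀ k, w₂ k ⬝ᵥ w₂ k ≤ ω₂)
    (hw₃ : ∀ k, w₃ k ⬝ᵥ w₃ k ≤ ω₃) (hw₄ : ∀ k, w₄ k ⬝ᵥ w₄ k ≤ ω₃)
    (hw₅ : ∀ k, w₅ k ⬝ᵥ (Pm *ᵥ w₅ k) ≤ 1) :
    ∀ k ≥ 1, ζ k ⬝ᵥ (P *ᵥ ζ k) ≤
      a ^ (k - 1) * (ζ 1 ⬝ᵥ (P *ᵥ ζ 1)) + (5 - a) * (1 - a ^ (k - 1)) / (1 - a) := by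
  have hPsym : Pᵀ = P := by simpa using hP.1.eq
  have bnd : ∀ (b ω : ℝ) (w : ℝ), b < 1 → 0 < ω → w ≤ ω → (1 - b) * ω⁻¹ * w ≤ 1 - b := by
    intro b ω w hb hω hw
    have h1 : (1 - b) * ω⁻¹ * w ≤ (1 - b) * ω⁻¹ * ω := by
      apply mul_le_mul_of_nonneg_left hw
      have : (0:ℝ) ≤ 1 - b := by linarith
      positivity
    calc (1 - b) * ω⁻¹ * w ≤ (1 - b) * ω⁻¹ * ω := h1
      _ = 1 - b := by field_simp
  have step : ∀ k, 1 ≤ k → ζ (k+1) ⬝ᵥ (P *ᵥ ζ (k+1)) ≤ a * (ζ k ⬝ᵥ (P *ᵥ ζ k)) + (5 - a) := by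
    intro k hk
    have h1 := keystep 𝒜 ℬ₁ ℬ₂ ℬ₃ ℬ₄ ℬ₅ Pm ω₁ ω₂ ω₃ a a₁ a₂ a₃ a₄ a₅ P hPsym hLMI
      (ζ k) (w₁ k) (w₂ k) (w₃ k) (w₄ k) (w₅ k)
    rw [← hdyn k hk] at h1
    have b₁ := bnd a₁ ω₁ _ ha₁.2 hω₁ (hw₁ k)
    have b₂ := bnd a₂ ω₂ _ ha₂.2 hω₂ (hw₂ k)
    have b₃ := bnd a₃ ω₃ _ ha₃.2 hω₃ (hw₃ k)
    have b₄ := bnd a₄ ω₃ _ ha₄.2 hω₃ (hw₄ k)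
    have b₅ : (1 - a₅) * (w₅ k ⬝ᵥ (Pm *ᵥ w₅ k)) ≤ 1 - a₅ := by
      have h5 := hw₅ k
      have : (0:ℝ) ≤ 1 - a₅ := by linarith [ha₅.2]
      nlinarith
    linarith
  have hane : (1:ℝ) - a ≠ 0 := by have := ha.2; intro h; linarith [ha.2]
  have main : ∀ n : ℕ, ζ (n+1) ⬝ᵥ (P *ᵥ ζ (n+1)) ≤
      a ^ n * (ζ 1 ⬝ᵥ (P *ᵥ ζ 1)) + (5 - a) * (1 - a ^ n) / (1 - a) := by
    intro n
    induction n with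
    | zero => simp
    | succ n ih =>
      have hs := step (n+1) (Nat.le_add_left 1 n)
      have ha0 := ha.1
      have hmul : a * (a ^ n * (ζ 1 ⬝ᵥ (P *ᵥ ζ 1)) + (5 - a) * (1 - a ^ n) / (1 - a))
          + (5 - a)
          = a ^ (n+1) * (ζ 1 ⬝ᵥ (P *ᵥ ζ 1)) + (5 - a) * (1 - a ^ (n+1)) / (1 - a) := by
        field_simp
        ring
      have h2 : a * (ζ (n+1) ⬝ᵥ (P *ᵥ ζ (n+1))) ≤
          a * (a ^ n * (ζ 1 ⬝ᵥ (P *ᵥ ζ 1)) + (5 - a) * (1 - a ^ n) / (1 - a)) :=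
        mul_le_mul_of_nonneg_left ih (le_of_lt ha0)
      linarith
  intro k hk
  obtain ⟨n, rfl⟩ := Nat.exists_eq_add_of_le hk
  have := main n
  simpa [Nat.add_comm, Nat.add_sub_cancel] using this
end

section
/- Let P ∈ ℝ^{n×n} be positive definite, α > 0, c ∈ ℝ^{n} with c ≠ 0, and b ∈ ℝ with |b| ≥ √(α · cᵀP^{−1}c). Then the minimum Euclidean distance between the solid ellipsoid E = {x ∈ ℝ^{n} : xᵀPx ≤ α} and the hyperplane H = {x ∈ ℝ^{n} : cᵀx = b}, i.e. the infimum of ‖x − y‖ over x ∈ E and y ∈ H, equals (|b| − √(α · cᵀP^{−1}c)) / ‖c‖, where ‖·‖ is the Euclidean norm. -/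
open Matrix

lemma symm_dot {n : ℕ} {P : Matrix (Fin n) (Fin n) ℝ} (hP : Pᵀ = P) (u v : Fin n → ℝ) :
    u ⬝ᵥ (P *ᵥ v) = v ⬝ᵥ (P *ᵥ u) := by
  rw [dotProduct_mulVec, ← mulVec_transpose, hP, dotProduct_comm]

lemma cs_psd {n : ℕ} {P : Matrix (Fin n) (Fin n) ℝ} (hP : P.PosSemidef) (u v : Fin n → ℝ) :
    (u ⬝ᵥ (P *ᵥ v))^2 ≤ (u ⬝ᵥ (P *ᵥ u)) * (v ⬝ᵥ (P *ᵥ v)) := by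
  have hsym : Pᵀ = P := hP.1
  have key : ∀ t : ℝ, 0 ≤ (v ⬝ᵥ (P *ᵥ v)) * (t * t) + (2 * (u ⬝ᵥ (P *ᵥ v))) * t
      + (u ⬝ᵥ (P *ᵥ u)) := by
    intro t
    have h := hP.dotProduct_mulVec_nonneg (u + t • v)
    simp only [star_trivial] at h
    have expand : (u + t • v) ⬝ᵥ (P *ᵥ (u + t • v)) =
        (v ⬝ᵥ (P *ᵥ v)) * (t * t) + (2 * (u ⬝ᵥ (P *ᵥ v))) * t + (u ⬝ᵥ (P *ᵥ u)) := by
      simp only [mulVec_add, mulVec_smul, add_dotProduct, dotProduct_add,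
        smul_dotProduct, dotProduct_smul, smul_eq_mul]
      rw [symm_dot hsym v u]
      ring
    rw [expand] at h
    exact h
  have hd := discrim_le_zero key
  rw [discrim] at hd
  nlinarith [hd]

/-- Distance from an ellipsoid to a hyperplane: for `P` positive
definite, `α > 0`, `c ≠ 0` and `|b| ≥ √(α cᵀP⁻¹c)`, the infimum of the Euclidean
distances `‖x - y‖ = √((x-y) ⬝ᵥ (x-y))` over `x` in the solid ellipsoid
`{x : xᵀPx ≤ α}` and `y` in the hyperplane `{y : cᵀy = b}` equals
`(|b| - √(α cᵀP⁻¹c)) / ‖c‖`. -/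
theorem stmt13 {n : ℕ} (P : Matrix (Fin n) (Fin n) ℝ) (hP : P.PosDef)
    (α : ℝ) (hα : 0 < α) (c : Fin n → ℝ) (hc : c ≠ 0) (b : ℝ)
    (hb : Real.sqrt (α * (c ⬝ᵥ (P⁻¹ *ᵥ c))) ≤ |b|) :
    sInf {d : ℝ | ∃ x y : Fin n → ℝ,
        x ⬝ᵥ (P *ᵥ x) ≤ α ∧ c ⬝ᵥ y = b ∧ d = Real.sqrt ((x - y) ⬝ᵥ (x - y))} =
      (|b| - Real.sqrt (α * (c ⬝ᵥ (P⁻¹ *ᵥ c)))) / Real.sqrt (c ⬝ᵥ c) := by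
  have hsym : Pᵀ = P := hP.1
  have hPinv : (P⁻¹).PosDef := hP.inv
  have hγ : 0 < c ⬝ᵥ (P⁻¹ *ᵥ c) := by simpa using hPinv.dotProduct_mulVec_pos hc
  set γ := c ⬝ᵥ (P⁻¹ *ᵥ c) with hγdef
  have hcc : 0 < c ⬝ᵥ c := by
    rcases (dotProduct_self_eq_zero (v := c)).not.2 hc with h
    have hnn : 0 ≤ c ⬝ᵥ c := Finset.sum_nonneg fun i _ => mul_self_nonneg _
    exact lt_of_le_of_ne hnn (Ne.symm h)
  set β := Real.sqrt (α * γ) with hβdef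
  have hβpos : 0 < β := Real.sqrt_pos.2 (mul_pos hα hγ)
  have hPPinv : P * P⁻¹ = 1 := mul_nonsing_inv P hP.det_pos.ne'.isUnit
  have hccs : 0 < Real.sqrt (c ⬝ᵥ c) := Real.sqrt_pos.2 hcc
  have hb0 : b ≠ 0 := by
    intro h; rw [h, abs_zero] at hb; exact absurd hb (not_le.2 hβpos)
  set κ : ℝ := b / |b| with hκdef
  have habs : |b| ≠ 0 := abs_ne_zero.2 hb0
  have hκb : κ * |b| = b := div_mul_cancel₀ b habs
  have hκsq : κ * κ = 1 := by
    rw [hκdef, div_mul_div_comm, abs_mul_abs_self, div_self (mul_ne_zero hb0 hb0)]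
  have hκabs : |κ| = 1 := by
    rw [hκdef, abs_div, abs_abs, div_self habs]
  have hPc : P *ᵥ (P⁻¹ *ᵥ c) = c := by
    rw [mulVec_mulVec, hPPinv, one_mulVec]
  have hq : (P⁻¹ *ᵥ c) ⬝ᵥ (P *ᵥ (P⁻¹ *ᵥ c)) = γ := by
    rw [hPc, dotProduct_comm, hγdef]
  set x₀ : Fin n → ℝ := (κ * Real.sqrt (α / γ)) • (P⁻¹ *ᵥ c) with hx₀def
  have hsqγ : Real.sqrt (α / γ) * Real.sqrt (α / γ) = α / γ :=
    Real.mul_self_sqrt (div_nonneg hα.le hγ.le)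
  have hx₀P : x₀ ⬝ᵥ (P *ᵥ x₀) = α := by
    rw [hx₀def, mulVec_smul, smul_dotProduct, dotProduct_smul, hq, smul_eq_mul, smul_eq_mul]
    have h : κ * Real.sqrt (α / γ) * (κ * Real.sqrt (α / γ) * γ)
        = (κ * κ) * ((Real.sqrt (α / γ) * Real.sqrt (α / γ)) * γ) := by ring
    rw [h, hκsq, hsqγ, one_mul, div_mul_cancel₀ _ hγ.ne']
  have hβeq : Real.sqrt (α / γ) * γ = β := by
    have h : α * γ = (α / γ) * (γ * γ) := by field_simp
    rw [hβdef, h, Real.sqrt_mul (div_nonneg hα.le hγ.le), Real.sqrt_mul_self hγ.le]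
  have hcx₀ : c ⬝ᵥ x₀ = κ * β := by
    rw [hx₀def, dotProduct_smul, smul_eq_mul, ← hγdef, mul_assoc, hβeq]
  set t₀ : ℝ := (b - c ⬝ᵥ x₀) / (c ⬝ᵥ c) with ht₀def
  set y₀ : Fin n → ℝ := x₀ + t₀ • c with hy₀def
  have hcy₀ : c ⬝ᵥ y₀ = b := by
    have hcsc : c ⬝ᵥ (t₀ • c) = t₀ * (c ⬝ᵥ c) := by rw [dotProduct_smul, smul_eq_mul]
    rw [hy₀def, dotProduct_add, hcsc, ht₀def, div_mul_cancel₀ _ hcc.ne']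
    ring
  have hxy₀ : x₀ - y₀ = (-t₀) • c := by
    rw [hy₀def]; module
  have hbx₀ : b - c ⬝ᵥ x₀ = κ * (|b| - β) := by
    rw [hcx₀, mul_sub, hκb]
  have habsbx₀ : |b - c ⬝ᵥ x₀| = |b| - β := by
    rw [hbx₀, abs_mul, hκabs, one_mul, abs_of_nonneg (by linarith [hb])]
  have hdist : Real.sqrt ((x₀ - y₀) ⬝ᵥ (x₀ - y₀)) = (|b| - β) / Real.sqrt (c ⬝ᵥ c) := by
    rw [hxy₀, smul_dotProduct, dotProduct_smul, smul_eq_mul, smul_eq_mul, ht₀def]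
    have : -((b - c ⬝ᵥ x₀) / (c ⬝ᵥ c)) * (-((b - c ⬝ᵥ x₀) / (c ⬝ᵥ c)) * (c ⬝ᵥ c))
        = (b - c ⬝ᵥ x₀)^2 / (c ⬝ᵥ c) := by field_simp
    rw [this, Real.sqrt_div (sq_nonneg _), Real.sqrt_sq_eq_abs, habsbx₀]
  apply IsLeast.csInf_eq
  constructor
  · exact ⟨x₀, y₀, hx₀P.le, hcy₀, hdist.symm⟩
  · rintro d ⟨x, y, hx, hy, rfl⟩
    have hcs1 : (c ⬝ᵥ (x - y))^2 ≤ (c ⬝ᵥ c) * ((x - y) ⬝ᵥ (x - y)) := by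
      have := cs_psd (Matrix.PosSemidef.one (n := Fin n) (R := ℝ)) c (x - y)
      simpa [one_mulVec] using this
    have hcs2 : (c ⬝ᵥ x)^2 ≤ α * γ := by
      have h2 := cs_psd hP.posSemidef (P⁻¹ *ᵥ c) x
      rw [hq, symm_dot hsym (P⁻¹ *ᵥ c) x, hPc, dotProduct_comm x c] at h2
      calc (c ⬝ᵥ x)^2 ≤ γ * (x ⬝ᵥ (P *ᵥ x)) := h2
        _ ≤ γ * α := by nlinarith [hγ, hx]
        _ = α * γ := mul_comm _ _
    have habscx : |c ⬝ᵥ x| ≤ β := by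
      rw [hβdef, ← Real.sqrt_sq_eq_abs]
      exact Real.sqrt_le_sqrt hcs2
    have h1 : |b| - β ≤ |c ⬝ᵥ (x - y)| := by
      have : c ⬝ᵥ (x - y) = c ⬝ᵥ x - b := by rw [dotProduct_sub, hy]
      rw [this]
      calc |b| - β ≤ |b| - |c ⬝ᵥ x| := by linarith
        _ ≤ |b - c ⬝ᵥ x| := abs_sub_abs_le_abs_sub b (c ⬝ᵥ x)
        _ = |c ⬝ᵥ x - b| := abs_sub_comm _ _
    have h2 : |c ⬝ᵥ (x - y)| ≤ Real.sqrt (c ⬝ᵥ c) * Real.sqrt ((x - y) ⬝ᵥ (x - y)) := by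
      rw [← Real.sqrt_sq_eq_abs, ← Real.sqrt_mul (le_of_lt hcc)]
      exact Real.sqrt_le_sqrt hcs1
    rw [div_le_iff₀ hccs]
    calc |b| - β ≤ Real.sqrt (c ⬝ᵥ c) * Real.sqrt ((x - y) ⬝ᵥ (x - y)) := le_trans h1 h2
      _ = Real.sqrt ((x - y) ⬝ᵥ (x - y)) * Real.sqrt (c ⬝ᵥ c) := mul_comm _ _
end
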